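/- arXiv:2510.02216 — 2 statements merged into one kernel-verified Lean document; each statement's English description precedes it below -/
import Mathlib

section
/- Let b ∈ ℝ^(d|I_obs|), ε₀ ∈ (0,1), and θ = 2/(λ_min(Σ_obs) + λ_max(Σ_obs)). Let ξ₀^(0), ξ₀^(1), … be vectors with ‖ξ₀^(j)‖₂ ≤ ε₀ for all j, and define the perturbed gradient-descent iterates u^(0) = 0 and u^(j+1) = u^(j) − θ(Σ_obs u^(j) − b) + ξ₀^(j). Then for every nonnegative integer K with K ≥ ((κ(Σ_obs)+1)/2)·log(‖b‖₂/(λ_min(Γ_obs)·λ_min(Λ)·ε₀)), one has ‖u^(K) − Σ_obs^(−1) b‖₂ ≤ ((κ(Σ_obs)+3)/2)·ε₀. -/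
open Matrix
open scoped Kronecker BigOperators

noncomputable section

/-- Euclidean norm of a finitely-indexed real vector. -/
def norm2 {ι : Type*} [Fintype ι] (v : ι → ℝ) : ℝ := Real.sqrt (∑ i, v i ^ 2)

/-- Largest eigenvalue of a real matrix, expressed as the supremum of the Rayleigh
quotient over the Euclidean unit sphere. -/
def lamMax {ι : Type*} [Fintype ι] (A : Matrix ι ι ℝ) : ℝ :=
  ⨆ v : {v : ι → ℝ // ∑ i, v i ^ 2 = 1}, v.1 ⬝ᵥ (A *ᵥ v.1)

/-- Smallest eigenvalue of a real matrix, expressed as the infimum of the Rayleigh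
quotient over the Euclidean unit sphere. -/
def lamMin {ι : Type*} [Fintype ι] (A : Matrix ι ι ℝ) : ℝ :=
  ⨅ v : {v : ι → ℝ // ∑ i, v i ^ 2 = 1}, v.1 ⬝ᵥ (A *ᵥ v.1)

/-- Condition number of a matrix. -/
def kappa {ι : Type*} [Fintype ι] (A : Matrix ι ι ℝ) : ℝ := lamMax A / lamMin A

/-!
The error `e j = u j - Σ⁻¹ b` satisfies `e (j+1) = (1 - θ Σ) (e j) + ξ j`. For symmetric `Σ` the
operator norm of `1 - θ Σ` equals its numerical radius, and since the Rayleigh quotients of `Σ` lie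
in `[m, M] = [λ_min, λ_max]`, the step `θ = 2 / (m + M)` makes it `(M - m) / (M + m) = 1 - 2/(κ+1)`.
Unrolling the recursion gives `‖e K‖ ≤ (1 - 2/(κ+1))^K ‖Σ⁻¹ b‖ + (κ+1)/2 · ε₀`. Finally
`‖Σ⁻¹ b‖ ≤ ‖b‖ / m`, and `m ≥ λ_min(Γ_obs) λ_min(Λ)` because, with `α = λ_min(A)`, `β = λ_min(B)`,
`A ⊗ B - α β • 1 = (A - α • 1) ⊗ B + α • 1 ⊗ (B - β • 1)` is positive semidefinite; and
`(1 - c)^K ≤ exp (-c K)` turns the lower bound on `K` into `(1 - 2/(κ+1))^K ‖b‖ / m ≤ ε₀`.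
-/

open WithLp
open scoped RealInnerProductSpace

section RayleighQuotient

variable {ι κ : Type*} [Fintype ι] [Fintype κ]

lemma isCompact_setOf_sum_sq_eq_one : IsCompact {v : ι → ℝ | ∑ i, v i ^ 2 = 1} := by
  refine Metric.isCompact_of_isClosed_isBounded (isClosed_eq (by fun_prop) continuous_const) ?_
  refine (Metric.isBounded_iff_subset_closedBall 0).2 ⟨1, fun v hv => ?_⟩
  rw [mem_closedBall_zero_iff, pi_norm_le_iff_of_nonneg zero_le_one]
  intro i
  rw [Real.norm_eq_abs, ← sq_le_one_iff_abs_le_one, ← (hv : ∑ i, v i ^ 2 = 1)]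
  exact Finset.single_le_sum (fun j _ => sq_nonneg (v j)) (Finset.mem_univ i)

instance : CompactSpace {v : ι → ℝ // ∑ i, v i ^ 2 = 1} :=
  isCompact_iff_compactSpace.mp isCompact_setOf_sum_sq_eq_one

instance [Nonempty ι] : Nonempty {v : ι → ℝ // ∑ i, v i ^ 2 = 1} := by
  classical
  obtain ⟨i⟩ := ‹Nonempty ι›
  exact ⟨⟨Pi.single i 1, by simp [sq, Pi.single_apply]⟩⟩

variable (A : Matrix ι ι ℝ)

-- `lamMin A` and `lamMax A` are the `sInf` and `sSup` of this set: compactness makes them attained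
-- values rather than junk values of an unbounded `⨅`/`⨆`.
lemma isCompact_range_dotProduct_mulVec :
    IsCompact (Set.range fun v : {v : ι → ℝ // ∑ i, v i ^ 2 = 1} => v.1 ⬝ᵥ (A *ᵥ v.1)) :=
  isCompact_range (by fun_prop)

lemma lamMin_le_dotProduct_mulVec {v : ι → ℝ} (hv : ∑ i, v i ^ 2 = 1) :
    lamMin A ≤ v ⬝ᵥ (A *ᵥ v) :=
  ciInf_le (isCompact_range_dotProduct_mulVec A).bddBelow ⟨v, hv⟩

lemma dotProduct_mulVec_le_lamMax {v : ι → ℝ} (hv : ∑ i, v i ^ 2 = 1) :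
    v ⬝ᵥ (A *ᵥ v) ≤ lamMax A :=
  le_ciSup (isCompact_range_dotProduct_mulVec A).bddAbove ⟨v, hv⟩

lemma exists_dotProduct_mulVec_eq_lamMin [Nonempty ι] :
    ∃ v : ι → ℝ, ∑ i, v i ^ 2 = 1 ∧ v ⬝ᵥ (A *ᵥ v) = lamMin A := by
  obtain ⟨v, hv⟩ := (isCompact_range_dotProduct_mulVec A).sInf_mem (Set.range_nonempty _)
  exact ⟨v.1, v.2, hv⟩

lemma sum_sq_pos_of_ne_zero {v : ι → ℝ} (hv : v ≠ 0) : 0 < ∑ i, v i ^ 2 := by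
  obtain ⟨i, hi⟩ := Function.ne_iff.mp hv
  exact Finset.sum_pos' (fun j _ => sq_nonneg _) ⟨i, Finset.mem_univ i, sq_pos_of_ne_zero hi⟩

lemma exists_sum_sq_eq_one_dotProduct_mulVec_eq_div {v : ι → ℝ} (hv : v ≠ 0) :
    ∃ w : ι → ℝ, ∑ i, w i ^ 2 = 1 ∧ w ⬝ᵥ (A *ᵥ w) = v ⬝ᵥ (A *ᵥ v) / ∑ i, v i ^ 2 := by
  have hs := sum_sq_pos_of_ne_zero hv
  set c := (√(∑ i, v i ^ 2))⁻¹
  have hc : c ^ 2 = (∑ i, v i ^ 2)⁻¹ := by rw [inv_pow, Real.sq_sqrt hs.le]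
  refine ⟨c • v, ?_, ?_⟩
  · simp only [Pi.smul_apply, smul_eq_mul, mul_pow, ← Finset.mul_sum, hc]
    exact inv_mul_cancel₀ hs.ne'
  · rw [mulVec_smul, smul_dotProduct, dotProduct_smul, smul_eq_mul, smul_eq_mul, ← mul_assoc,
      ← sq, hc, inv_mul_eq_div]

lemma lamMin_mul_sum_sq_le (v : ι → ℝ) : lamMin A * ∑ i, v i ^ 2 ≤ v ⬝ᵥ (A *ᵥ v) := by
  rcases eq_or_ne v 0 with rfl | hv
  · simp
  obtain ⟨w, hw, hwv⟩ := exists_sum_sq_eq_one_dotProduct_mulVec_eq_div A hv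
  have := lamMin_le_dotProduct_mulVec A hw
  rwa [hwv, le_div_iff₀ (sum_sq_pos_of_ne_zero hv)] at this

lemma dotProduct_mulVec_le_lamMax_mul_sum_sq (v : ι → ℝ) :
    v ⬝ᵥ (A *ᵥ v) ≤ lamMax A * ∑ i, v i ^ 2 := by
  rcases eq_or_ne v 0 with rfl | hv
  · simp
  obtain ⟨w, hw, hwv⟩ := exists_sum_sq_eq_one_dotProduct_mulVec_eq_div A hv
  have := dotProduct_mulVec_le_lamMax A hw
  rwa [hwv, div_le_iff₀ (sum_sq_pos_of_ne_zero hv)] at this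

lemma lamMin_le_lamMax [Nonempty ι] : lamMin A ≤ lamMax A := by
  obtain ⟨v, hv, -⟩ := exists_dotProduct_mulVec_eq_lamMin A
  exact (lamMin_le_dotProduct_mulVec A hv).trans (dotProduct_mulVec_le_lamMax A hv)

variable {A}

lemma Matrix.PosDef.lamMin_pos [Nonempty ι] (hA : A.PosDef) : 0 < lamMin A := by
  obtain ⟨v, hv, hvA⟩ := exists_dotProduct_mulVec_eq_lamMin A
  have hv0 : v ≠ 0 := by rintro rfl; simp at hv
  simpa [hvA] using hA.dotProduct_mulVec_pos hv0

lemma Matrix.PosSemidef.lamMin_nonneg [Nonempty ι] (hA : A.PosSemidef) : 0 ≤ lamMin A := by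
  obtain ⟨v, -, hvA⟩ := exists_dotProduct_mulVec_eq_lamMin A
  simpa [hvA] using hA.dotProduct_mulVec_nonneg v

lemma Matrix.PosDef.one_le_kappa [Nonempty ι] (hA : A.PosDef) : 1 ≤ kappa A :=
  (one_le_div hA.lamMin_pos).mpr (lamMin_le_lamMax A)

lemma dotProduct_sub_smul_one_mulVec [DecidableEq ι] (c : ℝ) (v : ι → ℝ) :
    v ⬝ᵥ ((A - c • 1) *ᵥ v) = v ⬝ᵥ (A *ᵥ v) - c * ∑ i, v i ^ 2 := by
  rw [sub_mulVec, dotProduct_sub, smul_mulVec, one_mulVec, dotProduct_smul, smul_eq_mul]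
  simp [dotProduct, sq]

lemma Matrix.IsHermitian.posSemidef_sub_lamMin_smul_one [DecidableEq ι] (hA : A.IsHermitian) :
    (A - lamMin A • 1).PosSemidef := by
  have hc : (lamMin A • 1 : Matrix ι ι ℝ).IsHermitian := isHermitian_one.smul (.all _)
  refine .of_dotProduct_mulVec_nonneg (hA.sub hc) fun v => ?_
  rw [star_trivial, dotProduct_sub_smul_one_mulVec, sub_nonneg]
  exact lamMin_mul_sum_sq_le A v

lemma le_lamMin_of_posSemidef_sub_smul_one [DecidableEq ι] [Nonempty ι] {c : ℝ}
    (h : (A - c • 1).PosSemidef) : c ≤ lamMin A := by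
  refine le_ciInf fun v => ?_
  have := h.dotProduct_mulVec_nonneg v.1
  rwa [star_trivial, dotProduct_sub_smul_one_mulVec, v.2, mul_one, sub_nonneg] at this

omit [Fintype ι] [Fintype κ] in
lemma kronecker_sub_smul_one [DecidableEq ι] [DecidableEq κ] (B : Matrix κ κ ℝ) (a b : ℝ) :
    A ⊗ₖ B - (a * b) • (1 : Matrix (ι × κ) (ι × κ) ℝ) =
      (A - a • 1) ⊗ₖ B + a • ((1 : Matrix ι ι ℝ) ⊗ₖ (B - b • 1)) := by
  ext ⟨i, j⟩ ⟨k, l⟩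
  by_cases hik : i = k <;> by_cases hjl : j = l <;> simp [hik, hjl, one_apply] <;> ring

lemma lamMin_mul_lamMin_le_lamMin_kronecker [DecidableEq ι] [DecidableEq κ] [Nonempty ι]
    [Nonempty κ] {B : Matrix κ κ ℝ} (hA : A.PosSemidef) (hB : B.PosSemidef) :
    lamMin A * lamMin B ≤ lamMin (A ⊗ₖ B) := by
  refine le_lamMin_of_posSemidef_sub_smul_one ?_
  rw [kronecker_sub_smul_one]
  exact (hA.1.posSemidef_sub_lamMin_smul_one.kronecker hB).add
    ((PosSemidef.one.kronecker hB.1.posSemidef_sub_lamMin_smul_one).smul hA.lamMin_nonneg)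

end RayleighQuotient

lemma le_one_sub_pow_mul_add_div {a : ℕ → ℝ} {c ε : ℝ} (hc : 0 < c) (hc1 : c ≤ 1) (hε : 0 ≤ ε)
    (h : ∀ j, a (j + 1) ≤ (1 - c) * a j + ε) : ∀ K, a K ≤ (1 - c) ^ K * a 0 + ε / c
  | 0 => by simp only [pow_zero, one_mul, le_add_iff_nonneg_right]; positivity
  | K + 1 =>
    calc a (K + 1) ≤ (1 - c) * a K + ε := h K
      _ ≤ (1 - c) * ((1 - c) ^ K * a 0 + ε / c) + ε := by
        gcongr
        exact le_one_sub_pow_mul_add_div hc hc1 hε h K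
      _ = (1 - c) ^ (K + 1) * a 0 + ε / c := by field_simp; ring

lemma one_sub_pow_mul_le_one_of_log_le {c R : ℝ} {K : ℕ} (hc : 0 < c) (hc1 : c ≤ 1) (hR : 0 ≤ R)
    (h : c⁻¹ * Real.log R ≤ K) : (1 - c) ^ K * R ≤ 1 := by
  rcases hR.eq_or_lt with rfl | hR
  · simp
  have hlog : Real.log R ≤ K * c := by rw [inv_mul_le_iff₀ hc] at h; linarith
  calc (1 - c) ^ K * R ≤ Real.exp (-c) ^ K * R := by
        gcongr
        exact Real.one_sub_le_exp_neg c
    _ = Real.exp (-(K * c) + Real.log R) := by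
        rw [Real.exp_add, Real.exp_log hR, ← Real.exp_nat_mul, mul_neg]
    _ ≤ 1 := by rw [Real.exp_le_one_iff]; linarith

lemma ContinuousLinearMap.norm_le_of_forall_abs_inner_le {E : Type*} [NormedAddCommGroup E]
    [InnerProductSpace ℝ E] {T : E →L[ℝ] E} (hT : (T : E →ₗ[ℝ] E).IsSymmetric) {ρ : ℝ}
    (hρ : 0 ≤ ρ) (h : ∀ x, |⟪T x, x⟫| ≤ ρ * ‖x‖ ^ 2) : ‖T‖ ≤ ρ := by
  rw [T.norm_eq_iSup_rayleighQuotient hT]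
  refine ciSup_le fun x => ?_
  rcases eq_or_ne x 0 with rfl | hx
  · simpa
  rw [ContinuousLinearMap.rayleighQuotient, ContinuousLinearMap.reApplyInnerSelf_apply,
    RCLike.re_to_real, abs_div, abs_sq, div_le_iff₀ (by positivity)]
  exact h x

section EuclideanNorm

variable {ι : Type*} [Fintype ι]

lemma norm2_nonneg (v : ι → ℝ) : 0 ≤ norm2 v := Real.sqrt_nonneg _

lemma norm2_sq (v : ι → ℝ) : norm2 v ^ 2 = ∑ i, v i ^ 2 :=
  Real.sq_sqrt (Finset.sum_nonneg fun _ _ => sq_nonneg _)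

lemma norm2_eq_norm_toLp (v : ι → ℝ) : norm2 v = ‖toLp 2 v‖ := by
  simp [norm2, EuclideanSpace.norm_eq]

lemma norm2_neg (v : ι → ℝ) : norm2 (-v) = norm2 v := by
  simp [norm2]

lemma norm2_add_le (v w : ι → ℝ) : norm2 (v + w) ≤ norm2 v + norm2 w := by
  simpa only [norm2_eq_norm_toLp, toLp_add] using norm_add_le _ _

lemma lamMin_mul_norm2_le_norm2_mulVec (A : Matrix ι ι ℝ) (v : ι → ℝ) :
    lamMin A * norm2 v ≤ norm2 (A *ᵥ v) := by
  rcases le_or_gt (lamMin A) 0 with hm | hm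
  · exact (mul_nonpos_of_nonpos_of_nonneg hm (norm2_nonneg v)).trans (norm2_nonneg _)
  rcases (norm2_nonneg v).eq_or_lt with hv | hv
  · rw [← hv, mul_zero]
    exact norm2_nonneg _
  have hquad : norm2 v * (lamMin A * norm2 v) ≤ norm2 v * norm2 (A *ᵥ v) :=
    calc norm2 v * (lamMin A * norm2 v) = lamMin A * ∑ i, v i ^ 2 := by rw [← norm2_sq]; ring
      _ ≤ v ⬝ᵥ (A *ᵥ v) := lamMin_mul_sum_sq_le A v
      _ = ⟪toLp 2 v, toLp 2 (A *ᵥ v)⟫ := by simp [EuclideanSpace.inner_toLp_toLp, dotProduct_comm]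
      _ ≤ norm2 v * norm2 (A *ᵥ v) := by
        simpa only [norm2_eq_norm_toLp] using real_inner_le_norm _ _
  exact le_of_mul_le_mul_left hquad hv

lemma Matrix.IsHermitian.norm2_mulVec_le [DecidableEq ι] {A : Matrix ι ι ℝ} (hA : A.IsHermitian)
    {ρ : ℝ} (hρ : 0 ≤ ρ) (h : ∀ v, |v ⬝ᵥ (A *ᵥ v)| ≤ ρ * ∑ i, v i ^ 2) (v : ι → ℝ) :
    norm2 (A *ᵥ v) ≤ ρ * norm2 v := by
  have hT : ‖toEuclideanCLM (𝕜 := ℝ) A‖ ≤ ρ := by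
    refine ContinuousLinearMap.norm_le_of_forall_abs_inner_le
      (isSymmetric_toEuclideanLin_iff.mpr hA) hρ fun x => ?_
    rw [real_inner_comm, inner_toEuclideanCLM]
    simpa only [← norm2_sq, norm2_eq_norm_toLp, toLp_ofLp] using h (ofLp x)
  calc norm2 (A *ᵥ v) = ‖toEuclideanCLM (𝕜 := ℝ) A (toLp 2 v)‖ := by
        rw [norm2_eq_norm_toLp, toEuclideanCLM_toLp]
    _ ≤ ‖toEuclideanCLM (𝕜 := ℝ) A‖ * ‖toLp 2 v‖ := ContinuousLinearMap.le_opNorm _ _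
    _ ≤ ρ * ‖toLp 2 v‖ := by gcongr
    _ = ρ * norm2 v := by rw [norm2_eq_norm_toLp]

lemma Matrix.PosDef.norm2_sub_smul_mulVec_le [DecidableEq ι] [Nonempty ι] {A : Matrix ι ι ℝ}
    (hA : A.PosDef) (v : ι → ℝ) :
    norm2 (v - (2 / (lamMin A + lamMax A)) • (A *ᵥ v)) ≤ (1 - 2 / (kappa A + 1)) * norm2 v := by
  set θ := 2 / (lamMin A + lamMax A)
  set ρ := 1 - 2 / (kappa A + 1)
  have hm := hA.lamMin_pos
  have hmM := lamMin_le_lamMax A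
  have hsum : 0 < lamMin A + lamMax A := by linarith
  have hc : 2 / (kappa A + 1) = 2 * lamMin A / (lamMin A + lamMax A) := by
    rw [kappa, div_add_one hm.ne', div_div_eq_mul_div, add_comm]
  -- `θ m = 1 - ρ` and `θ M = 1 + ρ`: this step size centres `1 - θ • A` in `[-ρ, ρ]`.
  have hθm : θ * lamMin A = 1 - ρ := by simp only [θ, ρ, hc]; ring
  have hθM : θ * lamMax A = 1 + ρ := by simp only [θ, ρ, hc]; field_simp; ring
  have hθ : 0 ≤ θ := div_nonneg zero_le_two hsum.le
  have hρ : 0 ≤ ρ := by linarith [mul_le_mul_of_nonneg_left hmM hθ]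
  have hB : (1 - θ • A).IsHermitian := isHermitian_one.sub (hA.1.smul (IsSelfAdjoint.all _))
  have hBv : (1 - θ • A) *ᵥ v = v - θ • (A *ᵥ v) := by rw [sub_mulVec, one_mulVec, smul_mulVec]
  refine hBv ▸ hB.norm2_mulVec_le hρ (fun w => ?_) v
  have hlo := mul_le_mul_of_nonneg_left (lamMin_mul_sum_sq_le A w) hθ
  have hhi := mul_le_mul_of_nonneg_left (dotProduct_mulVec_le_lamMax_mul_sum_sq A w) hθ
  rw [sub_mulVec, one_mulVec, smul_mulVec, dotProduct_sub, dotProduct_smul, smul_eq_mul, abs_le]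
  have hww : w ⬝ᵥ w = ∑ i, w i ^ 2 := by simp [dotProduct, sq]
  rw [← mul_assoc, hθm] at hlo
  rw [← mul_assoc, hθM] at hhi
  constructor <;> linarith

theorem Matrix.PosDef.norm2_perturbed_gradientDescent_sub_le [DecidableEq ι] [Nonempty ι]
    {A : Matrix ι ι ℝ} (hA : A.PosDef) (b : ι → ℝ) {ε : ℝ}
    {ξ u : ℕ → ι → ℝ} (hξ : ∀ j, norm2 (ξ j) ≤ ε) (hu0 : u 0 = 0)
    (hu : ∀ j, u (j + 1) = u j - (2 / (lamMin A + lamMax A)) • (A *ᵥ u j - b) + ξ j) (K : ℕ) :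
    norm2 (u K - A⁻¹ *ᵥ b) ≤
      (1 - 2 / (kappa A + 1)) ^ K * (norm2 b / lamMin A) + (kappa A + 1) / 2 * ε := by
  set w := A⁻¹ *ᵥ b
  have hw : A *ᵥ w = b := by
    rw [mulVec_mulVec, mul_nonsing_inv _ ((isUnit_iff_isUnit_det A).mp hA.isUnit), one_mulVec]
  have hκ : 0 < kappa A + 1 := by linarith [hA.one_le_kappa]
  have hc : 2 / (kappa A + 1) ≤ 1 := by rw [div_le_one hκ]; linarith [hA.one_le_kappa]
  have hstep (j : ℕ) : norm2 (u (j + 1) - w) ≤ (1 - 2 / (kappa A + 1)) * norm2 (u j - w) + ε := by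
    have herr : u (j + 1) - w =
        (u j - w) - (2 / (lamMin A + lamMax A)) • (A *ᵥ (u j - w)) + ξ j := by
      rw [hu j, mulVec_sub, hw]
      abel
    rw [herr]
    exact (norm2_add_le _ _).trans (add_le_add (hA.norm2_sub_smul_mulVec_le _) (hξ j))
  have hinit : norm2 (u 0 - w) ≤ norm2 b / lamMin A := by
    rw [hu0, zero_sub, norm2_neg, le_div_iff₀ hA.lamMin_pos, mul_comm, ← hw]
    exact lamMin_mul_norm2_le_norm2_mulVec A w
  have hε : 0 ≤ ε := (norm2_nonneg _).trans (hξ 0)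
  calc norm2 (u K - w)
      ≤ (1 - 2 / (kappa A + 1)) ^ K * norm2 (u 0 - w) + ε / (2 / (kappa A + 1)) :=
        le_one_sub_pow_mul_add_div (a := fun j => norm2 (u j - w)) (by positivity) hc hε hstep K
    _ ≤ (1 - 2 / (kappa A + 1)) ^ K * (norm2 b / lamMin A) + (kappa A + 1) / 2 * ε := by
        rw [div_div_eq_mul_div, mul_comm ε, mul_div_right_comm]
        gcongr

end EuclideanNorm

theorem gd_auxiliary_perturbed_convergence_general
    {H d : ℕ} (hd : 1 ≤ d)
    (Γ : Matrix (Fin H) (Fin H) ℝ) (Λ : Matrix (Fin d) (Fin d) ℝ)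
    (hΓ : Γ.PosDef) (hΛ : Λ.PosDef)
    (Iobs : Finset (Fin H)) (hobs : Iobs.Nonempty)
    (b : {i // i ∈ Iobs} × Fin d → ℝ) (ε₀ : ℝ) (hε₀ : 0 < ε₀)
    (ξ : ℕ → ({i // i ∈ Iobs} × Fin d → ℝ))
    (u : ℕ → ({i // i ∈ Iobs} × Fin d → ℝ)) :
    let Γobs : Matrix {i // i ∈ Iobs} {i // i ∈ Iobs} ℝ :=
      Γ.submatrix (fun i => (i : Fin H)) (fun i => (i : Fin H))
    let Sobs : Matrix ({i // i ∈ Iobs} × Fin d) ({i // i ∈ Iobs} × Fin d) ℝ := Γobs ⊗ₖ Λ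
    let θ : ℝ := 2 / (lamMin Sobs + lamMax Sobs)
    (∀ j : ℕ, norm2 (ξ j) ≤ ε₀) →
    u 0 = 0 →
    (∀ j : ℕ, u (j + 1) = u j - θ • (Sobs *ᵥ u j - b) + ξ j) →
    ∀ K : ℕ,
      ((kappa Sobs + 1) / 2) * Real.log (norm2 b / (lamMin Γobs * lamMin Λ * ε₀)) ≤ (K : ℝ) →
      norm2 (u K - Sobs⁻¹ *ᵥ b) ≤ ((kappa Sobs + 3) / 2) * ε₀ := by
  intro Γobs Sobs θ hξ hu0 hu K hK
  have := hobs.coe_sort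
  have : Nonempty (Fin d) := ⟨⟨0, hd⟩⟩
  have hΓobs : Γobs.PosDef := hΓ.submatrix Subtype.val_injective
  have hS : Sobs.PosDef := hΓobs.kronecker hΛ
  have hm₀ : 0 < lamMin Γobs * lamMin Λ := mul_pos hΓobs.lamMin_pos hΛ.lamMin_pos
  have hκ : 0 < kappa Sobs + 1 := by linarith [hS.one_le_kappa]
  have hc : 2 / (kappa Sobs + 1) ≤ 1 := by rw [div_le_one hκ]; linarith [hS.one_le_kappa]
  have hdecay : (1 - 2 / (kappa Sobs + 1)) ^ K * (norm2 b / lamMin Sobs) ≤ ε₀ :=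
    calc (1 - 2 / (kappa Sobs + 1)) ^ K * (norm2 b / lamMin Sobs)
        ≤ (1 - 2 / (kappa Sobs + 1)) ^ K * (norm2 b / (lamMin Γobs * lamMin Λ * ε₀)) * ε₀ := by
          rw [mul_assoc, ← div_div, div_mul_cancel₀ _ hε₀.ne']
          gcongr
          exacts [norm2_nonneg b,
            lamMin_mul_lamMin_le_lamMin_kronecker hΓobs.posSemidef hΛ.posSemidef]
      _ ≤ 1 * ε₀ := by
          gcongr
          refine one_sub_pow_mul_le_one_of_log_le (by positivity) hc
            (div_nonneg (norm2_nonneg b) (by positivity)) ?_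
          rwa [inv_div]
      _ = ε₀ := one_mul ε₀
  calc norm2 (u K - Sobs⁻¹ *ᵥ b)
      ≤ (1 - 2 / (kappa Sobs + 1)) ^ K * (norm2 b / lamMin Sobs) + (kappa Sobs + 1) / 2 * ε₀ :=
        hS.norm2_perturbed_gradientDescent_sub_le b hξ hu0 hu K
    _ ≤ ε₀ + (kappa Sobs + 1) / 2 * ε₀ := by gcongr
    _ = (kappa Sobs + 3) / 2 * ε₀ := by ring

/-- perturbed gradient descent for `L(u) = (1/2)uᵀΣ_obs u − uᵀb` with
step size `θ = 2/(λ_min(Σ_obs) + λ_max(Σ_obs))` and per-step errors `ξ₀^(j)` of norm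
at most `ε₀`: after `K ≥ ((κ(Σ_obs)+1)/2)·log(‖b‖₂/(λ_min(Γ_obs)λ_min(Λ)ε₀))`
iterations, `‖u^(K) − Σ_obs⁻¹b‖₂ ≤ ((κ(Σ_obs)+3)/2)·ε₀`. -/
theorem gd_auxiliary_perturbed_convergence
    {H d : ℕ} (hH : 2 ≤ H) (hd : 1 ≤ d)
    (Γ : Matrix (Fin H) (Fin H) ℝ) (Λ : Matrix (Fin d) (Fin d) ℝ)
    (hΓ : Γ.PosDef) (hΛ : Λ.PosDef)
    (Iobs Imiss : Finset (Fin H)) (hobs : Iobs.Nonempty) (hmiss : Imiss.Nonempty)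
    (hdisj : Disjoint Iobs Imiss) (hunion : Iobs ∪ Imiss = Finset.univ)
    (b : {i // i ∈ Iobs} × Fin d → ℝ) (ε₀ : ℝ) (hε₀ : 0 < ε₀) (hε₁ : ε₀ < 1)
    (ξ : ℕ → ({i // i ∈ Iobs} × Fin d → ℝ))
    (u : ℕ → ({i // i ∈ Iobs} × Fin d → ℝ)) :
    let Γobs : Matrix {i // i ∈ Iobs} {i // i ∈ Iobs} ℝ :=
      Γ.submatrix (fun i => (i : Fin H)) (fun i => (i : Fin H))
    let Sobs : Matrix ({i // i ∈ Iobs} × Fin d) ({i // i ∈ Iobs} × Fin d) ℝ := Γobs ⊗ₖ Λ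
    let θ : ℝ := 2 / (lamMin Sobs + lamMax Sobs)
    (∀ j : ℕ, norm2 (ξ j) ≤ ε₀) →
    u 0 = 0 →
    (∀ j : ℕ, u (j + 1) = u j - θ • (Sobs *ᵥ u j - b) + ξ j) →
    ∀ K : ℕ,
      ((kappa Sobs + 1) / 2) * Real.log (norm2 b / (lamMin Γobs * lamMin Λ * ε₀)) ≤ (K : ℝ) →
      norm2 (u K - Sobs⁻¹ *ᵥ b) ≤ ((kappa Sobs + 3) / 2) * ε₀ :=
  gd_auxiliary_perturbed_convergence_general hd Γ Λ hΓ hΛ Iobs hobs b ε₀ hε₀ ξ u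

end
end

section
/- Let Δ > 0 and a ∈ ℝ, and define T : ℝ → ℝ by T(x) = (8/Δ)·[ReLU(x − a + Δ/4) − ReLU(x − a + Δ/8) − ReLU(x − a − Δ/8) + ReLU(x − a − Δ/4)], where ReLU(u) = max(u, 0). Then 0 ≤ T(x) ≤ 1 for all x ∈ ℝ, T(x) = 1 whenever |x − a| ≤ Δ/8, and T(x) = 0 whenever |x − a| ≥ Δ/4. Consequently, if H ≥ 2, e_1, …, e_H ∈ ℝ^(d_e) satisfy ‖e_i‖₂ = r for all i and ‖e_i − e_j‖₂ = f(|i − j|) for a function f : {0,…,H−1} → [0,∞) with f(a') ≠ f(b') for a' ≠ b', and Δ ≤ min{|f(a')² − f(b')²| : a' ≠ b'}, then for every m ∈ {0,…,H−1}, taking a = r² − (1/2)f(m)², one has T(e_iᵀe_j) = 1 if |i − j| = m and T(e_iᵀe_j) = 0 if |i − j| ≠ m, for all i, j ∈ {1,…,H}. -/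
open Matrix
open scoped BigOperators

noncomputable section

/-- The rectified linear unit. -/
def relu (u : ℝ) : ℝ := max u 0

/-- The four-ReLU trapezoid function
`T(x) = (8/Δ)[ReLU(x−a+Δ/4) − ReLU(x−a+Δ/8) − ReLU(x−a−Δ/8) + ReLU(x−a−Δ/4)]`. -/
def trapezoid (Δ a x : ℝ) : ℝ :=
  (8 / Δ) * (relu (x - a + Δ/4) - relu (x - a + Δ/8) - relu (x - a - Δ/8) + relu (x - a - Δ/4))


lemma trap_mem (Δ : ℝ) (hΔ : 0 < Δ) (a x : ℝ) :
    0 ≤ trapezoid Δ a x ∧ trapezoid Δ a x ≤ 1 := by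
  unfold trapezoid relu
  have h8 : (0:ℝ) < 8 / Δ := by positivity
  constructor <;>
  · rcases le_total (x - a + Δ/4) 0 with h1 | h1 <;>
    rcases le_total (x - a + Δ/8) 0 with h2 | h2 <;>
    rcases le_total (x - a - Δ/8) 0 with h3 | h3 <;>
    rcases le_total (x - a - Δ/4) 0 with h4 | h4 <;>
    simp only [max_eq_left, max_eq_right, *] <;>
    rw [div_mul_eq_mul_div] <;>
    first
      | (apply div_nonneg _ hΔ.le; nlinarith)
      | (rw [div_le_one hΔ]; nlinarith)
      | nlinarith

lemma trap_one (Δ : ℝ) (hΔ : 0 < Δ) (a x : ℝ) (h : |x - a| ≤ Δ / 8) :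
    trapezoid Δ a x = 1 := by
  rw [abs_le] at h
  unfold trapezoid relu
  rw [max_eq_left (by linarith), max_eq_left (by linarith),
      max_eq_right (by linarith), max_eq_right (by linarith)]
  field_simp
  ring

lemma trap_zero (Δ : ℝ) (hΔ : 0 < Δ) (a x : ℝ) (h : Δ / 4 ≤ |x - a|) :
    trapezoid Δ a x = 0 := by
  rcases le_or_gt (x - a) 0 with hx | hx
  · have : x - a ≤ -(Δ/4) := by
      rcases abs_cases (x - a) with ⟨he, _⟩ | ⟨he, _⟩ <;> linarith
    unfold trapezoid relu
    rw [max_eq_right (by linarith), max_eq_right (by linarith),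
        max_eq_right (by linarith), max_eq_right (by linarith)]
    ring
  · have : Δ/4 ≤ x - a := by
      rcases abs_cases (x - a) with ⟨he, _⟩ | ⟨he, _⟩ <;> linarith
    unfold trapezoid relu
    rw [max_eq_left (by linarith), max_eq_left (by linarith),
        max_eq_left (by linarith), max_eq_left (by linarith)]
    ring

/-- the trapezoid function takes values in `[0,1]`, equals `1` on
`|x − a| ≤ Δ/8` and `0` on `|x − a| ≥ Δ/4`; consequently, applied to the inner products of
positional embeddings satisfying Assumption 1 with `a = r² − f(m)²/2`, it exactly
realizes the indicator `1{|i − j| = m}`. -/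
theorem trapezoid_realizes_gap_indicator
    (Δ : ℝ) (hΔ : 0 < Δ) (a : ℝ) :
    (∀ x : ℝ, 0 ≤ trapezoid Δ a x ∧ trapezoid Δ a x ≤ 1) ∧
    (∀ x : ℝ, |x - a| ≤ Δ / 8 → trapezoid Δ a x = 1) ∧
    (∀ x : ℝ, Δ / 4 ≤ |x - a| → trapezoid Δ a x = 0) ∧
    (∀ (H de : ℕ), 2 ≤ H →
      ∀ (r : ℝ) (e : Fin H → (Fin de → ℝ)) (f : ℕ → ℝ),
        (∀ i, norm2 (e i) = r) →
        (∀ a', a' < H → 0 ≤ f a') →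
        (∀ i j : Fin H, norm2 (e i - e j) = f (((i : ℤ) - (j : ℤ)).natAbs)) →
        (∀ a' b', a' < H → b' < H → a' ≠ b' → f a' ≠ f b') →
        (∀ a' b', a' < H → b' < H → a' ≠ b' → Δ ≤ |f a' ^ 2 - f b' ^ 2|) →
        ∀ m : ℕ, m < H → a = r ^ 2 - (1/2) * f m ^ 2 →
        ∀ i j : Fin H,
          ((((i : ℤ) - (j : ℤ)).natAbs = m → trapezoid Δ a (e i ⬝ᵥ e j) = 1) ∧
           (((i : ℤ) - (j : ℤ)).natAbs ≠ m → trapezoid Δ a (e i ⬝ᵥ e j) = 0))) := by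
  refine ⟨fun x => trap_mem Δ hΔ a x, fun x h => trap_one Δ hΔ a x h,
    fun x h => trap_zero Δ hΔ a x h, ?_⟩
  intro H de hH r e f hnorm hfpos hdist hfinj hgap m hm ha i j
  set n : ℕ := (((i : ℤ) - (j : ℤ)).natAbs) with hn
  have hnH : n < H := by
    have hi := i.isLt
    have hj := j.isLt
    rw [hn]
    omega
  have hr2 : ∀ k : Fin H, ∑ l, e k l ^ 2 = r ^ 2 := by
    intro k
    have := hnorm k
    rw [norm2] at this
    rw [← this, Real.sq_sqrt (by positivity)]
  have hd2 : ∑ l, (e i l - e j l) ^ 2 = f n ^ 2 := by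
    have h := hdist i j
    rw [norm2] at h
    simp only [Pi.sub_apply] at h
    rw [← hn] at h
    rw [← h, Real.sq_sqrt (by positivity)]
  have hip : e i ⬝ᵥ e j = r ^ 2 - (1/2) * f n ^ 2 := by
    have expand : ∑ l, (e i l - e j l) ^ 2
        = ((∑ l, e i l ^ 2) + ∑ l, e j l ^ 2) - 2 * ∑ l, e i l * e j l := by
      rw [Finset.mul_sum, ← Finset.sum_add_distrib, ← Finset.sum_sub_distrib]
      exact Finset.sum_congr rfl fun l _ => by ring
    rw [hr2 i, hr2 j, hd2] at expand
    simp only [dotProduct]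
    nlinarith [expand]
  constructor
  · intro hnm
    apply trap_one Δ hΔ
    rw [hip, hnm, ha, sub_self, abs_zero]
    positivity
  · intro hnm
    apply trap_zero Δ hΔ
    rw [hip, ha]
    have hg := hgap n m hnH hm hnm
    rw [abs_sub_comm] at hg
    rw [show r ^ 2 - 1/2 * f n ^ 2 - (r ^ 2 - 1/2 * f m ^ 2)
          = (f m ^ 2 - f n ^ 2) / 2 from by ring]
    have h2 : |(f m ^ 2 - f n ^ 2) / 2| = |f m ^ 2 - f n ^ 2| / 2 := by
      rw [abs_div, abs_two]
    linarith

end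
end
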